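/- arXiv:2211.01074 — 2 statements merged into one kernel-verified Lean document; each statement's English description precedes it below -/
import Mathlib

section
/- Let F be a field and let L be a left Leibniz algebra over F with dim_F L = 3 which is not a Lie algebra. Assume Leib(L) ⊄ ζ(L), dim_F Leib(L) = 1, and L/Leib(L) is non-abelian (there exist a,b ∈ L with [a,b] ∉ Leib(L)). Then ζ(L) = 0. -/
open Module Polynomial

variable {F L : Type*} [Field F] [AddCommGroup L] [Module F L]

/-- The left Leibniz identity for a bilinear bracket. -/
def IsLeibniz (β : L →ₗ[F] L →ₗ[F] L) : Prop :=
  ∀ a b c : L, β (β a b) c = β a (β b c) - β b (β a c)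

/-- The Leibniz kernel `Leib(L)`: the subspace spanned by all squares `[a,a]`. -/
def leibKer (β : L →ₗ[F] L →ₗ[F] L) : Submodule F L :=
  Submodule.span F (Set.range fun a => β a a)

/-- The center `ζ(L)` of a Leibniz algebra. -/
def lzCenter (β : L →ₗ[F] L →ₗ[F] L) : Submodule F L where
  carrier := {x | ∀ y, β x y = 0 ∧ β y x = 0}
  add_mem' := by
    intro a b ha hb y
    refine ⟨?_, ?_⟩
    · rw [map_add, LinearMap.add_apply, (ha y).1, (hb y).1, add_zero]
    · rw [map_add, (ha y).2, (hb y).2, add_zero]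
  zero_mem' := by
    intro y
    refine ⟨?_, ?_⟩ <;> simp
  smul_mem' := by
    intro c a ha y
    refine ⟨?_, ?_⟩
    · rw [map_smul, LinearMap.smul_apply, (ha y).1, smul_zero]
    · rw [map_smul, (ha y).2, smul_zero]

/-- The derived subalgebra `[L,L]`. -/
def leibDerived (β : L →ₗ[F] L →ₗ[F] L) : Submodule F L :=
  Submodule.span F {x | ∃ a b : L, β a b = x}

/-- The lower central series: `leibGamma β 1 = ⊤`, `leibGamma β (k+1) = [L, leibGamma β k]`. -/
def leibGamma (β : L →ₗ[F] L →ₗ[F] L) : ℕ → Submodule F L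
  | 0 => ⊤
  | 1 => ⊤
  | (n+2) => Submodule.span F {x | ∃ a b : L, b ∈ leibGamma β (n+1) ∧ β a b = x}

/-- The derived series: `leibDelta β 0 = ⊤`, `leibDelta β (n+1) = [leibDelta β n, leibDelta β n]`. -/
def leibDelta (β : L →ₗ[F] L →ₗ[F] L) : ℕ → Submodule F L
  | 0 => ⊤
  | (n+1) => Submodule.span F
      {x | ∃ a ∈ leibDelta β n, ∃ b ∈ leibDelta β n, β a b = x}

/-- Multiplication table predicate: the brackets of the triple `a` are given by `t`. -/
def MulTbl (β : L →ₗ[F] L →ₗ[F] L) (a : Fin 3 → L) (t : Fin 3 → Fin 3 → L) : Prop :=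
  ∀ i j, β (a i) (a j) = t i j

lemma sq_mem (β : L →ₗ[F] L →ₗ[F] L) (a : L) : β a a ∈ leibKer β :=
  Submodule.subset_span ⟨a, rfl⟩

lemma add_sym_mem (β : L →ₗ[F] L →ₗ[F] L) (u v : L) : β u v + β v u ∈ leibKer β := by
  have h : β u v + β v u = β (u+v) (u+v) - β u u - β v v := by
    simp [map_add]; abel
  rw [h]
  exact sub_mem (sub_mem (sq_mem β _) (sq_mem β _)) (sq_mem β _)

lemma leftCentral (β : L →ₗ[F] L →ₗ[F] L) (hLeib : IsLeibniz β) {x : L}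
    (hx : x ∈ leibKer β) (c : L) : β x c = 0 := by
  induction hx using Submodule.span_induction with
  | mem y hy => obtain ⟨a, rfl⟩ := hy; rw [hLeib a a c]; abel
  | zero => simp
  | add y z _ _ hy hz => simp [hy, hz]
  | smul t y _ hy => simp [hy]

lemma rightIdeal (β : L →ₗ[F] L →ₗ[F] L) (hLeib : IsLeibniz β) {x : L}
    (hx : x ∈ leibKer β) (c : L) : β c x ∈ leibKer β := by
  induction hx using Submodule.span_induction with
  | mem y hy =>
      obtain ⟨a, rfl⟩ := hy
      have h := hLeib c a a
      have : β c (β a a) = β (β c a) a + β a (β c a) := by rw [h]; abel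
      rw [this]
      exact add_sym_mem β _ _
  | zero => simp
  | add y z _ _ hy hz => rw [map_add]; exact add_mem hy hz
  | smul t y _ hy => rw [map_smul]; exact Submodule.smul_mem _ _ hy

lemma mem_lzCenter {β : L →ₗ[F] L →ₗ[F] L} {x : L} :
    x ∈ lzCenter β ↔ ∀ y, β x y = 0 ∧ β y x = 0 := Iff.rfl

theorem stmt14 (β : L →ₗ[F] L →ₗ[F] L) (hLeib : IsLeibniz β)
    (hdim : finrank F L = 3) (hnotLie : ∃ a : L, β a a ≠ 0)
    (hnsub : ¬ leibKer β ≤ lzCenter β) (hk : finrank F (leibKer β) = 1)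
    (hnab : ∃ a b : L, β a b ∉ leibKer β) :
    lzCenter β = ⊥ := by
  classical
  obtain ⟨a, b, hab⟩ := hnab
  simp only [SetLike.le_def, not_forall] at hnsub
  obtain ⟨k, hkK, hknc⟩ := hnsub
  have hxk : ∃ x, β x k ≠ 0 := by
    by_contra h
    push_neg at h
    exact hknc (mem_lzCenter.mpr fun y => ⟨leftCentral β hLeib hkK y, h y⟩)
  obtain ⟨x, hxk⟩ := hxk
  have hk0 : k ≠ 0 := fun h => hxk (by simp [h])
  have hstep : ∀ (t : F) (w : L), w ∈ leibKer β → t • β a b = w → t = 0 := by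
    intro t w hw h
    by_contra ht
    exact hab (by rw [← inv_smul_smul₀ ht (β a b), h]; exact Submodule.smul_mem _ _ hw)
  have hli : LinearIndependent F ![a, b, k] := by
    rw [Fintype.linearIndependent_iff]
    intro g hg
    rw [Fin.sum_univ_three] at hg
    simp only [Matrix.cons_val_zero, Matrix.cons_val_one, Matrix.head_cons,
      Matrix.cons_val_two, Matrix.tail_cons] at hg
    have ha' : g 0 • a = -(g 1 • b) - g 2 • k := by rw [← sub_eq_zero, ← hg]; abel
    have h0 : g 0 = 0 := by
      refine hstep _ (-(g 1 • β b b)) (neg_mem (Submodule.smul_mem _ _ (sq_mem β b))) ?_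
      calc g 0 • β a b = β (g 0 • a) b := by simp
        _ = β (-(g 1 • b) - g 2 • k) b := by rw [ha']
        _ = -(g 1 • β b b) - g 2 • β k b := by simp
        _ = -(g 1 • β b b) := by rw [leftCentral β hLeib hkK b, smul_zero, sub_zero]
    have hb' : g 1 • b = -(g 2 • k) := by
      rw [h0, zero_smul, zero_add] at hg
      rw [← sub_eq_zero, ← hg]; abel
    have h1 : g 1 = 0 := by
      refine hstep _ (-(g 2 • β a k)) (neg_mem (Submodule.smul_mem _ _ (rightIdeal β hLeib hkK a))) ?_
      calc g 1 • β a b = β a (g 1 • b) := by simp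
        _ = β a (-(g 2 • k)) := by rw [hb']
        _ = -(g 2 • β a k) := by simp
    have h2 : g 2 = 0 := by
      rw [h0, zero_smul, zero_add, h1, zero_smul, zero_add] at hg
      have : g 2 • β x k = 0 := by
        have := congrArg (fun w => β x w) hg
        simpa using this
      rcases smul_eq_zero.mp this with h | h
      · exact h
      · exact absurd h hxk
    intro i
    fin_cases i <;> assumption
  haveI : FiniteDimensional F L := FiniteDimensional.of_finrank_pos (by rw [hdim]; norm_num)
  have hcard : Fintype.card (Fin 3) = finrank F L := by simp [hdim]
  let bs : Basis (Fin 3) F L := basisOfLinearIndependentOfCardEqFinrank hli hcard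
  have hbs : ∀ i, bs i = ![a, b, k] i := fun i => by
    simp [bs, coe_basisOfLinearIndependentOfCardEqFinrank]
  ext z
  simp only [Submodule.mem_bot]
  constructor
  · intro hz
    rw [mem_lzCenter] at hz
    set c : Fin 3 → F := fun i => bs.repr z i with hc
    have hzrep : z = c 0 • a + c 1 • b + c 2 • k := by
      conv_lhs => rw [← bs.sum_repr z]
      rw [Fin.sum_univ_three, hbs 0, hbs 1, hbs 2]
      simp [hc]
    have h0 : c 0 = 0 := by
      refine hstep _ (-(c 1 • β b b)) (neg_mem (Submodule.smul_mem _ _ (sq_mem β b))) ?_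
      have e := (hz b).1
      rw [hzrep] at e
      simp only [map_add, map_smul, LinearMap.add_apply, LinearMap.smul_apply] at e
      rw [leftCentral β hLeib hkK b, smul_zero, add_zero] at e
      rw [← sub_eq_zero, ← e]; abel
    have h1 : c 1 = 0 := by
      refine hstep _ (-(c 2 • β a k)) (neg_mem (Submodule.smul_mem _ _ (rightIdeal β hLeib hkK a))) ?_
      have e := (hz a).2
      rw [hzrep, h0, zero_smul, zero_add] at e
      simp only [map_add, map_smul] at e
      rw [← sub_eq_zero, ← e]; abel
    have h2 : c 2 = 0 := by
      have e := (hz x).2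
      rw [hzrep, h0, zero_smul, zero_add, h1, zero_smul, zero_add, map_smul] at e
      rcases smul_eq_zero.mp e with h | h
      · exact h
      · exact absurd h hxk
    rw [hzrep, h0, h1, h2]
    simp
  · rintro rfl
    exact (lzCenter β).zero_mem
end

section
/- Let F be a field and let L be a nilpotent left Leibniz algebra over F with dim_F L = 3 which is not a Lie algebra. Assume dim_F Leib(L) = 2. Then L cannot have nilpotency class 2; that is, γ_3(L) = [L,[L,L]] ≠ 0, so the nilpotency class of L is exactly 3. -/
open Module Polynomial

variable {F L : Type*} [Field F] [AddCommGroup L] [Module F L]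

/-! The Leibniz kernel `Leib(L)` lies in `γ₂(L)` and annihilates `L` from the left.
In a nilpotent algebra the lower central series descends strictly until it vanishes,
so `dim γ₂ ≤ 2`, which forces `γ₂ = Leib(L)`. If `γ₃` vanished, `γ₂` would be central;
writing `L = F e ⊕ γ₂`, every bracket would then be a multiple of `[e,e]`,
so `dim γ₂ ≤ 1`. Finally `dim γ₄ ≤ 3 - 3 = 0`. -/

section LowerCentralSeries

variable (β : L →ₗ[F] L →ₗ[F] L)

theorem leibGamma_succ_succ (n : ℕ) :
    leibGamma β (n + 2) =
      Submodule.span F {x | ∃ a b : L, b ∈ leibGamma β (n + 1) ∧ β a b = x} :=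
  rfl

theorem bracket_mem_leibGamma {n : ℕ} (a : L) {b : L} (hb : b ∈ leibGamma β (n + 1)) :
    β a b ∈ leibGamma β (n + 2) :=
  Submodule.subset_span ⟨a, b, hb, rfl⟩

theorem leibGamma_succ_le : ∀ n, leibGamma β (n + 1) ≤ leibGamma β n
  | 0 => le_rfl
  | 1 => le_top
  | n + 2 => by
      rw [leibGamma_succ_succ, leibGamma_succ_succ]
      refine Submodule.span_mono ?_
      rintro x ⟨a, b, hb, rfl⟩
      exact ⟨a, b, leibGamma_succ_le (n + 1) hb, rfl⟩

theorem leibGamma_antitone : Antitone (leibGamma β) :=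
  antitone_nat_of_succ_le (leibGamma_succ_le β)

theorem leibGamma_add_eq_of_succ_eq {n : ℕ} (h : leibGamma β (n + 2) = leibGamma β (n + 1)) :
    ∀ m, leibGamma β (n + 1 + m) = leibGamma β (n + 1)
  | 0 => rfl
  | m + 1 => by
      rw [show n + 1 + (m + 1) = n + m + 2 by omega, leibGamma_succ_succ,
        show n + m + 1 = n + 1 + m by omega, leibGamma_add_eq_of_succ_eq h m,
        ← leibGamma_succ_succ, h]

theorem leibGamma_succ_lt {n : ℕ} (hnil : ∃ k, leibGamma β k = ⊥)
    (hne : leibGamma β (n + 1) ≠ ⊥) : leibGamma β (n + 2) < leibGamma β (n + 1) := by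
  refine lt_of_le_of_ne (leibGamma_succ_le β _) fun h => hne ?_
  obtain ⟨k, hk⟩ := hnil
  rw [← leibGamma_add_eq_of_succ_eq β h k, eq_bot_iff, ← hk]
  exact leibGamma_antitone β (Nat.le_add_left k (n + 1))

theorem finrank_leibGamma_succ_le [FiniteDimensional F L] (hnil : ∃ k, leibGamma β k = ⊥) :
    ∀ n, finrank F (leibGamma β (n + 1)) ≤ finrank F L - n
  | 0 => Submodule.finrank_le _
  | n + 1 => by
      show finrank F (leibGamma β (n + 2)) ≤ finrank F L - (n + 1)
      by_cases hne : leibGamma β (n + 1) = ⊥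
      · have hbot : leibGamma β (n + 2) = ⊥ := eq_bot_iff.mpr (hne ▸ leibGamma_succ_le β _)
        rw [hbot, finrank_bot]
        exact Nat.zero_le _
      · have := Submodule.finrank_lt_finrank_of_lt (leibGamma_succ_lt β hnil hne)
        have := finrank_leibGamma_succ_le hnil n
        omega

theorem leibKer_le_leibGamma_two : leibKer β ≤ leibGamma β 2 := by
  rw [leibKer, Submodule.span_le]
  rintro x ⟨a, rfl⟩
  exact bracket_mem_leibGamma β a trivial

end LowerCentralSeries

section LeibnizKernel

variable {β : L →ₗ[F] L →ₗ[F] L}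

theorem IsLeibniz.apply_eq_zero_of_mem_leibKer (hLeib : IsLeibniz β) {x : L}
    (hx : x ∈ leibKer β) : β x = 0 := by
  induction hx using Submodule.span_induction with
  | mem x hx =>
    obtain ⟨a, rfl⟩ := hx
    ext y
    simp [hLeib a a y]
  | zero => simp
  | add x y _ _ hx hy => simp [hx, hy]
  | smul c x _ hx => simp [hx]

theorem IsLeibniz.leibGamma_two_le_lzCenter (hLeib : IsLeibniz β)
    (hker : leibGamma β 2 ≤ leibKer β) (h3 : leibGamma β 3 = ⊥) :
    leibGamma β 2 ≤ lzCenter β := fun x hx y =>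
  ⟨by rw [hLeib.apply_eq_zero_of_mem_leibKer (hker hx), LinearMap.zero_apply],
    (Submodule.mem_bot F).mp (h3 ▸ bracket_mem_leibGamma β y hx)⟩

end LeibnizKernel

theorem Submodule.exists_span_singleton_sup_eq_top {K V : Type*} [Field K] [AddCommGroup V]
    [Module K V] [FiniteDimensional K V] {N : Submodule K V}
    (hN : finrank K N + 1 = finrank K V) :
    ∃ e : V, (K ∙ e) ⊔ N = ⊤ := by
  obtain ⟨e, he⟩ : ∃ e, e ∉ N := by
    by_contra! h
    have := finrank_top K V ▸
      congrArg (fun P : Submodule K V => finrank K P) (eq_top_iff'.mpr h)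
    omega
  refine ⟨e, Submodule.eq_top_of_finrank_eq (le_antisymm (Submodule.finrank_le _) ?_)⟩
  have hlt : N < (K ∙ e) ⊔ N :=
    lt_of_le_of_ne le_sup_right fun h =>
      he (h ▸ Submodule.mem_sup_left (Submodule.mem_span_singleton_self e))
  have := Submodule.finrank_lt_finrank_of_lt hlt
  omega

theorem leibGamma_two_le_span_of_sup_eq_top {β : L →ₗ[F] L →ₗ[F] L} {N : Submodule F L}
    {e : L} (hN : N ≤ lzCenter β) (he : (F ∙ e) ⊔ N = ⊤) :
    leibGamma β 2 ≤ F ∙ β e e := by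
  have hdecomp : ∀ a : L, ∃ s : F, ∃ u ∈ N, s • e + u = a := fun a => by
    obtain ⟨y, hy, u, hu, rfl⟩ :=
      Submodule.mem_sup.mp (he ▸ Submodule.mem_top : a ∈ (F ∙ e) ⊔ N)
    obtain ⟨s, rfl⟩ := Submodule.mem_span_singleton.mp hy
    exact ⟨s, u, hu, rfl⟩
  rw [leibGamma_succ_succ, Submodule.span_le]
  rintro _ ⟨a, b, -, rfl⟩
  obtain ⟨s, u, hu, rfl⟩ := hdecomp a
  obtain ⟨t, v, hv, rfl⟩ := hdecomp b
  have hβ : β (s • e + u) (t • e + v) = (s * t) • β e e := by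
    simp [(hN hu _).1, (hN hv _).2, smul_smul]
  exact hβ ▸ Submodule.smul_mem _ _ (Submodule.mem_span_singleton_self _)

theorem stmt16_general (β : L →ₗ[F] L →ₗ[F] L) (hLeib : IsLeibniz β)
    (hdim : finrank F L = 3)
    (hnil : ∃ k : ℕ, leibGamma β k = ⊥)
    (hk : finrank F (leibKer β) = 2) :
    leibGamma β 3 ≠ ⊥ ∧ leibGamma β 4 = ⊥ := by
  have : FiniteDimensional F L := FiniteDimensional.of_finrank_pos (by omega)
  have h2 : finrank F (leibGamma β 2) ≤ 3 - 1 := hdim ▸ finrank_leibGamma_succ_le β hnil 1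
  have hker : leibKer β = leibGamma β 2 :=
    Submodule.eq_of_le_of_finrank_le (leibKer_le_leibGamma_two β) (by omega)
  rw [hker] at hk
  refine ⟨fun h3 => ?_, ?_⟩
  · obtain ⟨e, he⟩ :=
      Submodule.exists_span_singleton_sup_eq_top (N := leibGamma β 2) (by omega)
    have hle :=
      leibGamma_two_le_span_of_sup_eq_top (hLeib.leibGamma_two_le_lzCenter hker.ge h3) he
    have h1 : finrank F (F ∙ β e e) ≤ 1 :=
      (finrank_span_le_card ({β e e} : Set L)).trans (by simp)
    have := Submodule.finrank_mono hle
    omega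
  · exact Submodule.finrank_eq_zero.mp <|
      by simpa [hdim] using finrank_leibGamma_succ_le β hnil 3

theorem stmt16 (β : L →ₗ[F] L →ₗ[F] L) (hLeib : IsLeibniz β)
    (hdim : finrank F L = 3) (hnotLie : ∃ a : L, β a a ≠ 0)
    (hnil : ∃ k : ℕ, leibGamma β k = ⊥)
    (hk : finrank F (leibKer β) = 2) :
    leibGamma β 3 ≠ ⊥ ∧ leibGamma β 4 = ⊥ :=
  stmt16_general β hLeib hdim hnil hk
end
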